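/- arXiv:1506.08549 — 5 statements merged into one kernel-verified Lean document; each statement's English description precedes it below -/
import Mathlib

section
/- Let n ∈ ℕ and let α₁, …, αₙ be real numbers with α₁ + ⋯ + αₙ = 0. Then there exists a permutation σ of {1, …, n} such that for every k ∈ {1, …, n}, the partial sum |α_{σ(1)} + ⋯ + α_{σ(k)}| ≤ max_{1 ≤ i ≤ n} |α_i|. -/
open Finset

/-- Greedy construction: order the indices in `s` so that all partial sums
(starting from `acc`) stay bounded by `M`. -/
lemma greedy_aux {n : ℕ} (α : Fin n → ℝ) (M : ℝ) (hle : ∀ i, |α i| ≤ M) :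
    ∀ (s : Finset (Fin n)) (acc : ℝ), |acc| ≤ M → acc + ∑ i ∈ s, α i = 0 →
      ∃ L : List (Fin n), L.Nodup ∧ L.toFinset = s ∧
        ∀ k ≤ L.length, |acc + ((L.take k).map α).sum| ≤ M := by
  classical
  intro s
  induction s using Finset.strongInduction with
  | _ s ih =>
    intro acc hacc hsum
    rcases s.eq_empty_or_nonempty with rfl | hs
    · exact ⟨[], by simp, by simp, fun k hk => by simpa using hacc⟩
    · have key : ∀ i ∈ s, |acc + α i| ≤ M →
          ∃ L : List (Fin n), L.Nodup ∧ L.toFinset = s ∧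
            ∀ k ≤ L.length, |acc + ((L.take k).map α).sum| ≤ M := by
        intro i hi hacci
        obtain ⟨L, hnd, hts, hinv⟩ := ih (s.erase i) (Finset.erase_ssubset hi)
            (acc + α i) hacci (by
              have := Finset.add_sum_erase s α hi
              linarith)
        have hiL : i ∉ L := by
          intro h
          have : i ∈ L.toFinset := List.mem_toFinset.2 h
          rw [hts] at this
          exact (Finset.notMem_erase i s) this
        refine ⟨i :: L, by simp [hnd, hiL], ?_, ?_⟩
        · simp [hts, Finset.insert_erase hi]
        · intro k hk
          cases k with
          | zero => simpa using hacc
          | succ k =>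
            have hk' : k ≤ L.length := by simpa using hk
            have := hinv k hk'
            simpa [add_assoc] using this
      rcases le_or_gt 0 acc with h | h
      · have hex : ∃ i ∈ s, α i ≤ 0 := by
          by_contra hcon
          push_neg at hcon
          have hpos : 0 < ∑ i ∈ s, α i := Finset.sum_pos (fun i hi => hcon i hi) hs
          linarith
        obtain ⟨i, hi, hαi⟩ := hex
        refine key i hi (abs_le.2 ⟨?_, ?_⟩)
        · have := (abs_le.1 (hle i)).1
          linarith
        · have := (abs_le.1 hacc).2
          linarith
      · have hex : ∃ i ∈ s, 0 ≤ α i := by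
          by_contra hcon
          push_neg at hcon
          have hneg : ∑ i ∈ s, α i < 0 := Finset.sum_neg (fun i hi => hcon i hi) hs
          linarith
        obtain ⟨i, hi, hαi⟩ := hex
        refine key i hi (abs_le.2 ⟨?_, ?_⟩)
        · have := (abs_le.1 hacc).1
          linarith
        · have := (abs_le.1 (hle i)).2
          linarith

lemma take_map_sum {n : ℕ} (α : Fin n → ℝ) (L : List (Fin n)) :
    ∀ (m : ℕ) (hm : m ≤ L.length),
      ((L.take m).map α).sum = ∑ j : Fin m, α (L.get (Fin.castLE hm j)) := by
  intro m
  induction m with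
  | zero => simp
  | succ m ih =>
    intro hm
    have hm' : m < L.length := hm
    have h1 : ((L.take (m+1)).map α).sum = ((L.take m).map α).sum + α (L.get ⟨m, hm'⟩) := by
      rw [List.map_take, List.map_take, List.sum_take_succ _ m (by simpa using hm')]
      simp
    rw [h1, ih (le_of_lt hm'), Fin.sum_univ_castSucc]
    congr 1

/-- If real numbers `α₁, …, αₙ` sum to `0`, there is a permutation `σ`
of the indices such that every partial sum of the rearranged sequence is bounded in
absolute value by `max_i |α_i|`. -/
theorem exists_perm_partial_sums_le_max
    (n : ℕ) (α : Fin n → ℝ) (hsum : ∑ i, α i = 0) :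
    ∃ σ : Equiv.Perm (Fin n), ∀ k : Fin n,
      |∑ i ∈ Finset.Iic k, α (σ i)| ≤ ⨆ i : Fin n, |α i| := by
  rcases Nat.eq_zero_or_pos n with hn | hn
  · subst hn; exact ⟨Equiv.refl _, fun k => k.elim0⟩
  set M := ⨆ i : Fin n, |α i| with hM
  have hle : ∀ i, |α i| ≤ M :=
    fun i => le_ciSup (f := fun i => |α i|) (Set.Finite.bddAbove (Set.finite_range _)) i
  have hM0 : 0 ≤ M := le_trans (abs_nonneg _) (hle ⟨0, hn⟩)
  obtain ⟨L, hnd, hts, hinv⟩ := greedy_aux α M hle Finset.univ 0 (by simpa using hM0)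
    (by simpa using hsum)
  have hlen : L.length = n := by
    have := List.toFinset_card_of_nodup hnd
    rw [hts, Finset.card_univ, Fintype.card_fin] at this
    omega
  have hinj : Function.Injective (fun i : Fin n => L.get (Fin.cast hlen.symm i)) := by
    intro a b hab
    have := List.nodup_iff_injective_get.1 hnd hab
    exact Fin.cast_injective _ this
  refine ⟨Equiv.ofBijective _ ((Finite.injective_iff_bijective).1 hinj), fun k => ?_⟩
  have hkn : k.val + 1 ≤ L.length := by omega
  have hinv' := hinv (k.val + 1) hkn
  rw [take_map_sum α L (k.val + 1) hkn] at hinv'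
  have heq : ∑ i ∈ Finset.Iic k, α ((Equiv.ofBijective _ ((Finite.injective_iff_bijective).1 hinj)) i)
      = ∑ j : Fin (k.val + 1), α (L.get (Fin.castLE hkn j)) := by
    refine Finset.sum_bij' (fun a ha => (⟨a.val, by
        have : a.val ≤ k.val := Fin.le_def.mp (Finset.mem_Iic.mp ha)
        omega⟩ : Fin (k.val + 1)))
      (fun j _ => (⟨j.val, by omega⟩ : Fin n)) ?_ ?_ ?_ ?_ ?_
    · intro a ha
      exact Finset.mem_univ _
    · intro j _
      have hj : j.val ≤ k.val := Nat.lt_succ_iff.mp j.isLt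
      exact Finset.mem_Iic.2 hj
    · intro a ha
      exact Fin.ext rfl
    · intro j hj
      exact Fin.ext rfl
    · intro a ha
      exact congrArg α (Fin.ext rfl)
  rw [heq]
  simpa using hinv'
end

section
/- Let u = diag(e^{iφ}, e^{−iφ}) and v = diag(e^{iθ}, e^{−iθ}) be non-central elements of G = SU(2), with θ ∈ [−π/2, π/2]. If |φ| ≤ m|θ| for some even natural number m, then u is a product of m conjugates of v in G. -/
open Real Complex

noncomputable section

private def Dm (s : ℝ) : Matrix (Fin 2) (Fin 2) ℂ :=
  !![Complex.exp (Complex.I * s), 0; 0, Complex.exp (-(Complex.I * s))]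

private def Mm (a b : ℂ) : Matrix (Fin 2) (Fin 2) ℂ :=
  !![a, b; -(starRingEnd ℂ) b, (starRingEnd ℂ) a]

private lemma star_Mm (a b : ℂ) : star (Mm a b) = Mm ((starRingEnd ℂ) a) (-b) := by
  ext i j
  fin_cases i <;> fin_cases j <;>
    simp [Mm, Matrix.star_eq_conjTranspose, Matrix.conjTranspose_apply]

private lemma Mm_mem (a b : ℂ) (h : a * (starRingEnd ℂ) a + b * (starRingEnd ℂ) b = 1) :
    Mm a b ∈ Matrix.specialUnitaryGroup (Fin 2) ℂ := by
  rw [Matrix.mem_specialUnitaryGroup_iff]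
  constructor
  · rw [Matrix.mem_unitaryGroup_iff, star_Mm]
    ext i j
    fin_cases i <;> fin_cases j <;>
      simp [Mm, Matrix.mul_apply, Fin.sum_univ_two, Matrix.one_apply] <;>
      (first | linear_combination h | ring)
  · simp only [Mm, Matrix.det_fin_two_of]
    linear_combination h

private lemma Dm_eq_Mm (s : ℝ) : Dm s = Mm (Complex.exp (Complex.I * s)) 0 := by
  simp only [Dm, Mm, map_zero, neg_zero]
  rw [← Complex.exp_conj]
  congr 1
  simp [Complex.ext_iff]

private lemma Dm_mem (s : ℝ) : Dm s ∈ Matrix.specialUnitaryGroup (Fin 2) ℂ := by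
  rw [Dm_eq_Mm]
  apply Mm_mem
  rw [← Complex.exp_conj, ← Complex.exp_add]
  have : Complex.I * s + (starRingEnd ℂ) (Complex.I * s) = 0 := by
    simp [Complex.ext_iff]
  rw [this, Complex.exp_zero]
  ring

private lemma hexpI (s : ℝ) :
    Complex.exp (Complex.I * s) = (Real.cos s : ℂ) + (Real.sin s : ℂ) * Complex.I := by
  rw [mul_comm, Complex.exp_mul_I, Complex.ofReal_cos, Complex.ofReal_sin]

private lemma hexpI' (s : ℝ) :
    Complex.exp (-(Complex.I * s)) = (Real.cos s : ℂ) - (Real.sin s : ℂ) * Complex.I := by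
  have : -(Complex.I * s) = Complex.I * ((-s : ℝ) : ℂ) := by push_cast; ring
  rw [this, hexpI]; push_cast [Real.cos_neg, Real.sin_neg]; ring

-- extract entry equations from SU(2) membership
private lemma su2_entries (A : Matrix (Fin 2) (Fin 2) ℂ)
    (hA : A ∈ Matrix.specialUnitaryGroup (Fin 2) ℂ) :
    A 1 1 = (starRingEnd ℂ) (A 0 0) ∧ A 1 0 = -((starRingEnd ℂ) (A 0 1)) ∧
      A 0 0 * (starRingEnd ℂ) (A 0 0) + A 0 1 * (starRingEnd ℂ) (A 0 1) = 1 := by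
  obtain ⟨hU, hdet⟩ := Matrix.mem_specialUnitaryGroup_iff.mp hA
  have h1 : A * star A = 1 := Matrix.mem_unitaryGroup_iff.mp hU
  have h2 : star A * A = 1 := Matrix.mem_unitaryGroup_iff'.mp hU
  have hdet' : A 0 0 * A 1 1 - A 0 1 * A 1 0 = 1 := by
    rw [← Matrix.det_fin_two]; exact hdet
  have E1 : (starRingEnd ℂ) (A 0 0) * A 0 0 + (starRingEnd ℂ) (A 1 0) * A 1 0 = 1 := by
    have := congrFun (congrFun h2 0) 0
    simpa [Matrix.mul_apply, Fin.sum_univ_two, Matrix.star_eq_conjTranspose,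
      Matrix.conjTranspose_apply, Matrix.one_apply] using this
  have E2 : (starRingEnd ℂ) (A 0 0) * A 0 1 + (starRingEnd ℂ) (A 1 0) * A 1 1 = 0 := by
    have := congrFun (congrFun h2 0) 1
    simpa [Matrix.mul_apply, Fin.sum_univ_two, Matrix.star_eq_conjTranspose,
      Matrix.conjTranspose_apply, Matrix.one_apply] using this
  have E3 : A 1 0 * (starRingEnd ℂ) (A 0 0) + A 1 1 * (starRingEnd ℂ) (A 0 1) = 0 := by
    have := congrFun (congrFun h1 1) 0
    simpa [Matrix.mul_apply, Fin.sum_univ_two, Matrix.star_eq_conjTranspose,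
      Matrix.conjTranspose_apply, Matrix.one_apply] using this
  have E4 : A 0 0 * (starRingEnd ℂ) (A 0 0) + A 0 1 * (starRingEnd ℂ) (A 0 1) = 1 := by
    have := congrFun (congrFun h1 0) 0
    simpa [Matrix.mul_apply, Fin.sum_univ_two, Matrix.star_eq_conjTranspose,
      Matrix.conjTranspose_apply, Matrix.one_apply] using this
  refine ⟨?_, ?_, E4⟩
  · linear_combination (starRingEnd ℂ) (A 0 0) * hdet' + A 1 0 * E2 - A 1 1 * E1
  · linear_combination A 0 0 * E3 - (starRingEnd ℂ) (A 0 1) * hdet' - A 1 0 * E4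

private lemma conj_expI (s : ℝ) :
    (starRingEnd ℂ) (Complex.exp (Complex.I * s)) = Complex.exp (-(Complex.I * s)) := by
  rw [← Complex.exp_conj]; congr 1; simp [Complex.ext_iff]

private lemma conj_expI' (s : ℝ) :
    (starRingEnd ℂ) (Complex.exp (-(Complex.I * s))) = Complex.exp (Complex.I * s) := by
  rw [← Complex.exp_conj]; congr 1; simp [Complex.ext_iff]

private lemma Mm_conj (p q e1 e2 : ℂ) :
    Mm p q * !![e1, 0; 0, e2] * star (Mm p q) =
    !![p * e1 * (starRingEnd ℂ) p + q * e2 * (starRingEnd ℂ) q,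
       -(p * e1 * q) + q * e2 * p;
       -((starRingEnd ℂ) q * e1 * (starRingEnd ℂ) p) + (starRingEnd ℂ) p * e2 * (starRingEnd ℂ) q,
       (starRingEnd ℂ) q * e1 * q + (starRingEnd ℂ) p * e2 * p] := by
  rw [star_Mm]
  simp only [Mm, Matrix.mul_fin_two]
  ext i j
  fin_cases i <;> fin_cases j <;> simp <;> ring

private lemma fin_two_ext {A B : Matrix (Fin 2) (Fin 2) ℂ} (h00 : A 0 0 = B 0 0)
    (h01 : A 0 1 = B 0 1) (h10 : A 1 0 = B 1 0) (h11 : A 1 1 = B 1 1) : A = B := by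
  ext i j
  fin_cases i <;> fin_cases j <;> assumption

private lemma conj_of_trace (θ : ℝ) (hs0 : Real.sin θ ≠ 0)
    (A : Matrix (Fin 2) (Fin 2) ℂ) (hA : A ∈ Matrix.specialUnitaryGroup (Fin 2) ℂ)
    (htr : A.trace = 2 * (Real.cos θ : ℂ)) :
    ∃ g ∈ Matrix.specialUnitaryGroup (Fin 2) ℂ, A = g * Dm θ * star g := by
  obtain ⟨hd, hcneg, hnorm⟩ := su2_entries A hA
  have hα : A 0 0 = ((A 0 0).re : ℂ) + ((A 0 0).im : ℂ) * Complex.I := (Complex.re_add_im _).symm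
  have hβ : A 0 1 = ((A 0 1).re : ℂ) + ((A 0 1).im : ℂ) * Complex.I := (Complex.re_add_im _).symm
  set a := (A 0 0).re with ha'
  set b := (A 0 0).im with hb'
  set c := (A 0 1).re with hc'
  set d := (A 0 1).im with hd'
  -- trace gives a = cos θ
  have hare : a = Real.cos θ := by
    rw [Matrix.trace_fin_two, hd] at htr
    have h := congrArg Complex.re htr
    simp only [Complex.add_re, Complex.conj_re] at h
    have h2 : ((2:ℂ) * (Real.cos θ:ℂ)).re = 2 * Real.cos θ := by norm_cast
    rw [h2] at h
    rw [ha']; linarith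
  -- norm equation in reals
  have hnormR : a ^ 2 + b ^ 2 + c ^ 2 + d ^ 2 = 1 := by
    rw [Complex.mul_conj, Complex.mul_conj] at hnorm
    norm_cast at hnorm
    simp only [Complex.normSq_apply, ← ha', ← hb', ← hc', ← hd'] at hnorm
    linear_combination hnorm
  set s := Real.sin θ with hs'
  have hbcd : b ^ 2 + c ^ 2 + d ^ 2 = s ^ 2 := by
    have h1 : Real.sin θ ^ 2 + Real.cos θ ^ 2 = 1 := Real.sin_sq_add_cos_sq θ
    rw [hare] at hnormR; rw [hs']; nlinarith [hnormR, h1]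
  have hb2 : b ^ 2 ≤ s ^ 2 := by nlinarith [sq_nonneg c, sq_nonneg d]
  have hs2 : (0:ℝ) < s ^ 2 := by positivity
  set r := b / s with hr'
  have hrb : r * s = b := by rw [hr']; field_simp
  have hr1 : -1 ≤ r := by
    rcases le_or_gt (-1) r with h | h
    · exact h
    · exfalso
      have hgt : 1 < r ^ 2 := by nlinarith
      rw [hr', div_pow] at hgt
      have := (one_lt_div hs2).mp hgt
      nlinarith
  by_cases hcase : 1 + r = 0
  -- degenerate case : b = -s, c = d = 0, A = Dm (-θ)
  · have hbs : b = -s := by rw [← hrb, show r = -1 by linarith]; ring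
    have hb2' : b ^ 2 = s ^ 2 := by rw [hbs]; ring
    have hc0 : c = 0 := by
      have h2 : c ^ 2 = 0 := by nlinarith [sq_nonneg d]
      exact (pow_eq_zero_iff two_ne_zero).mp h2
    have hd0 : d = 0 := by
      have h2 : d ^ 2 = 0 := by nlinarith [sq_nonneg c]
      exact (pow_eq_zero_iff two_ne_zero).mp h2
    refine ⟨Mm 0 1, Mm_mem 0 1 (by simp), ?_⟩
    have hDm : Dm θ = !![Complex.exp (Complex.I * θ), 0; 0, Complex.exp (-(Complex.I * θ))] := rfl
    rw [hDm, Mm_conj]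
    have hα0 : A 0 0 = Complex.exp (-(Complex.I * θ)) := by
      rw [hα, hare, hbs, hs', hexpI']; push_cast; ring
    have hβ0 : A 0 1 = 0 := by rw [hβ, hc0, hd0]; simp
    apply fin_two_ext <;>
      simp [hα0, hβ0, hd, hcneg, conj_expI, conj_expI']
  -- main case
  · have hcase' : 0 < 1 + r := lt_of_le_of_ne (by linarith) (Ne.symm hcase)
    set γ := Real.sqrt ((1 + r) / 2) with hγ'
    have hγpos : 0 < γ := Real.sqrt_pos.mpr (by linarith)
    have hγsq : γ ^ 2 = (1 + r) / 2 := Real.sq_sqrt (by linarith)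
    set δ := ((-d : ℂ) + (c : ℂ) * Complex.I) / ((2 * s * γ : ℝ) : ℂ) with hδ'
    have hsne : s ≠ 0 := by rw [hs']; exact hs0
    have hw0R : (2 * s * γ : ℝ) ≠ 0 := by
      intro h0
      rcases mul_eq_zero.mp h0 with h1 | h2
      · rcases mul_eq_zero.mp h1 with h3 | h4
        · norm_num at h3
        · exact hsne h4
      · exact absurd h2 (ne_of_gt hγpos)
    have hw0 : ((2 * s * γ : ℝ) : ℂ) ≠ 0 := Complex.ofReal_ne_zero.mpr hw0R
    -- |δ|² as a real number
    have hcd2 : c ^ 2 + d ^ 2 = s ^ 2 * (1 - r ^ 2) := by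
      linear_combination hbcd + (s * r + b) * hrb
    have hδδ : δ * (starRingEnd ℂ) δ = (((1 - r) / 2 : ℝ) : ℂ) := by
      rw [Complex.mul_conj, hδ', Complex.normSq_div]
      have h1 : Complex.normSq ((-d : ℂ) + (c : ℂ) * Complex.I) = c ^ 2 + d ^ 2 := by
        simp [Complex.normSq_apply]; ring
      have h2 : Complex.normSq ((2 * s * γ : ℝ) : ℂ) = 4 * s ^ 2 * γ ^ 2 := by
        rw [Complex.normSq_ofReal]; ring
      rw [h1, h2, hcd2, hγsq]
      congr 1
      field_simp
      ring
    have hγγ : ((γ:ℂ)) * (γ:ℂ) = (((1 + r) / 2 : ℝ) : ℂ) := by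
      have : γ * γ = (1 + r) / 2 := by linear_combination hγsq
      exact_mod_cast congrArg Complex.ofReal this
    have hmem : Mm (γ : ℂ) δ ∈ Matrix.specialUnitaryGroup (Fin 2) ℂ := by
      apply Mm_mem
      rw [Complex.conj_ofReal, hδδ, hγγ, ← Complex.ofReal_add, ← Complex.ofReal_one]
      congr 1
      ring
    refine ⟨Mm (γ : ℂ) δ, hmem, ?_⟩
    -- key scalar identities
    have k1 : (γ:ℂ) * Complex.exp (Complex.I * θ) * (γ:ℂ)
        + δ * Complex.exp (-(Complex.I * θ)) * (starRingEnd ℂ) δ = A 0 0 := by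
      have h2 : δ * Complex.exp (-(Complex.I * θ)) * (starRingEnd ℂ) δ
          = (δ * (starRingEnd ℂ) δ) * Complex.exp (-(Complex.I * θ)) := by ring
      rw [h2, hδδ]
      have h1 : (γ:ℂ) * Complex.exp (Complex.I * θ) * (γ:ℂ)
          = ((γ:ℂ) * (γ:ℂ)) * Complex.exp (Complex.I * θ) := by ring
      rw [h1, hγγ, hexpI, hexpI', hα, hare, ← hs']
      have hbrs : ((b:ℝ) : ℂ) = ((r * s : ℝ) : ℂ) := by exact_mod_cast congrArg Complex.ofReal hrb.symm
      rw [hbrs]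
      push_cast
      ring
    have hδw : δ * ((2 * s * γ : ℝ) : ℂ) = (-d : ℂ) + (c : ℂ) * Complex.I :=
      div_mul_cancel₀ _ hw0
    have k2 : (γ:ℂ) * δ * (Complex.exp (-(Complex.I * θ)) - Complex.exp (Complex.I * θ)) = A 0 1 := by
      have hE : Complex.exp (-(Complex.I * θ)) - Complex.exp (Complex.I * θ)
          = -(2 * ((Real.sin θ : ℝ) : ℂ) * Complex.I) := by
        rw [hexpI, hexpI']; ring
      rw [hE, hβ]
      have expand : (γ:ℂ) * δ * (-(2 * ((Real.sin θ : ℝ) : ℂ) * Complex.I))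
          = (δ * ((2 * s * γ : ℝ) : ℂ)) * (-Complex.I) := by
        rw [hs']; push_cast; ring
      rw [expand, hδw]
      linear_combination (-(c:ℂ)) * Complex.I_sq
    -- conjugated identities
    have k1' : (γ:ℂ) * Complex.exp (-(Complex.I * θ)) * (γ:ℂ)
        + (starRingEnd ℂ) δ * Complex.exp (Complex.I * θ) * δ = (starRingEnd ℂ) (A 0 0) := by
      have h := congrArg (starRingEnd ℂ) k1
      simp only [map_add, _root_.map_mul, conj_expI, conj_expI', Complex.conj_ofReal,
        RingHomCompTriple.comp_apply, RingHom.id_apply, Complex.conj_conj] at h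
      linear_combination h
    have k2' : (γ:ℂ) * (starRingEnd ℂ) δ * (Complex.exp (Complex.I * θ)
        - Complex.exp (-(Complex.I * θ))) = (starRingEnd ℂ) (A 0 1) := by
      have h := congrArg (starRingEnd ℂ) k2
      simp only [map_sub, _root_.map_mul, conj_expI, conj_expI', Complex.conj_ofReal] at h
      linear_combination h
    -- final matrix equality
    have hDm : Dm θ = !![Complex.exp (Complex.I * θ), 0; 0, Complex.exp (-(Complex.I * θ))] := rfl
    rw [hDm, Mm_conj, Complex.conj_ofReal]
    apply fin_two_ext <;>
      simp only [Matrix.of_apply, Matrix.cons_val', Matrix.cons_val_zero, Matrix.cons_val_one,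
        Matrix.head_cons, Matrix.empty_val', Matrix.cons_val_fin_one, Matrix.head_fin_const]
    · linear_combination -k1
    · linear_combination -k2
    · rw [hcneg]; linear_combination k2'
    · rw [hd]; linear_combination -k1'

private def Rm (t : ℝ) : Matrix (Fin 2) (Fin 2) ℂ :=
  Mm ((Real.cos t : ℝ) : ℂ) (-((Real.sin t : ℝ) : ℂ))

private lemma Rm_mem (t : ℝ) : Rm t ∈ Matrix.specialUnitaryGroup (Fin 2) ℂ := by
  apply Mm_mem
  rw [Complex.conj_ofReal, map_neg, Complex.conj_ofReal]
  have h2 : (Real.cos t * Real.cos t + Real.sin t * Real.sin t : ℝ) = 1 := by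
    nlinarith [Real.sin_sq_add_cos_sq t]
  have h3 : ((Real.cos t * Real.cos t + Real.sin t * Real.sin t : ℝ) : ℂ) = ((1:ℝ) : ℂ) :=
    congrArg _ h2
  rw [Complex.ofReal_add, Complex.ofReal_mul, Complex.ofReal_mul, Complex.ofReal_one] at h3
  linear_combination h3

private lemma star_Rm (t : ℝ) : star (Rm t) = Rm (-t) := by
  simp only [Rm, star_Mm, Complex.conj_ofReal, Real.cos_neg, Real.sin_neg,
    Complex.ofReal_neg, neg_neg]

private lemma Rm_mul_star (t : ℝ) : Rm t * star (Rm t) = 1 :=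
  Matrix.mem_unitaryGroup_iff.mp (Matrix.mem_specialUnitaryGroup_iff.mp (Rm_mem t)).1

private lemma Dm_mul (a b : ℝ) : Dm a * Dm b = Dm (a + b) := by
  simp only [Dm, Matrix.mul_fin_two, mul_zero, zero_mul, add_zero, zero_add,
    ← Complex.exp_add]
  congr 2 <;> push_cast <;> ring

private lemma trace_DR (p t : ℝ) :
    (Dm p * Rm t).trace = 2 * ((Real.cos t * Real.cos p : ℝ) : ℂ) := by
  simp only [Dm, Rm, Mm, Matrix.mul_fin_two, Matrix.trace_fin_two_of, mul_zero, zero_mul,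
    add_zero, zero_add, Complex.conj_ofReal, map_neg, hexpI, hexpI']
  push_cast
  ring

private lemma pair (θ : ℝ) (hθc : 0 ≤ Real.cos θ) (hθπ : |θ| ≤ π / 2)
    (hs0 : Real.sin θ ≠ 0) (ψ : ℝ) (hψ : |ψ| ≤ 2 * |θ|) :
    ∃ x y : Matrix (Fin 2) (Fin 2) ℂ,
      (∃ g ∈ Matrix.specialUnitaryGroup (Fin 2) ℂ, x = g * Dm θ * star g) ∧
      (∃ g ∈ Matrix.specialUnitaryGroup (Fin 2) ℂ, y = g * Dm θ * star g) ∧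
      x * y = Dm ψ := by
  set p := ψ / 2 with hp'
  have hpθ : |p| ≤ |θ| := by rw [hp', abs_div, _root_.abs_two]; linarith
  have hcosp : Real.cos θ ≤ Real.cos p := by
    have h := Real.cos_le_cos_of_nonneg_of_le_pi (abs_nonneg p)
      (le_trans hθπ (by linarith [Real.pi_pos])) hpθ
    rwa [Real.cos_abs, Real.cos_abs] at h
  have hpnn : 0 ≤ Real.cos p := le_trans hθc hcosp
  set q := Real.cos θ / Real.cos p with hq'
  have hq0 : 0 ≤ q := div_nonneg hθc hpnn
  have hq1 : q ≤ 1 := by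
    rcases eq_or_lt_of_le hpnn with h | h
    · rw [hq', ← h, div_zero]; norm_num
    · rw [hq']; exact div_le_one_of_le₀ hcosp (le_of_lt h)
  set t := Real.arccos q with ht'
  have hct : Real.cos t = q := Real.cos_arccos (by linarith) hq1
  have htrace : Real.cos t * Real.cos p = Real.cos θ := by
    rcases eq_or_lt_of_le hpnn with h | h
    · have hc0 : Real.cos θ = 0 := le_antisymm (h ▸ hcosp) hθc
      rw [← h, hc0, mul_zero]
    · rw [hct, hq', div_mul_cancel₀ _ (ne_of_gt h)]
  refine ⟨Dm p * Rm t, star (Rm t) * Dm p, ?_, ?_, ?_⟩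
  · apply conj_of_trace θ hs0 _ (mul_mem (Dm_mem p) (Rm_mem t))
    rw [trace_DR, htrace]
  · rw [star_Rm]
    apply conj_of_trace θ hs0 _ (mul_mem (Rm_mem (-t)) (Dm_mem p))
    rw [Matrix.trace_mul_comm, trace_DR, Real.cos_neg, htrace]
  · rw [mul_assoc, ← mul_assoc (Rm t), Rm_mul_star, one_mul, Dm_mul]
    congr 1
    rw [hp']; ring

private lemma main_aux (θ : ℝ) (hθc : 0 ≤ Real.cos θ) (hθπ : |θ| ≤ π / 2)
    (hs0 : Real.sin θ ≠ 0) :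
    ∀ k : ℕ, ∀ φ : ℝ, |φ| ≤ 2 * k * |θ| →
    ∃ w : List (Matrix (Fin 2) (Fin 2) ℂ), w.length = 2 * k ∧
      (∀ x ∈ w, ∃ g ∈ Matrix.specialUnitaryGroup (Fin 2) ℂ, x = g * Dm θ * star g) ∧
      w.prod = Dm φ := by
  intro k
  induction k with
  | zero =>
    intro φ hφ
    have h0 : φ = 0 := by
      have := abs_nonneg φ
      have : |φ| = 0 := le_antisymm (by simpa using hφ) (abs_nonneg φ)
      exact abs_eq_zero.mp this
    refine ⟨[], rfl, by simp, ?_⟩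
    rw [h0, List.prod_nil]
    apply fin_two_ext <;> simp [Dm]
  | succ n ih =>
    intro φ hφ
    have habs : 0 ≤ |θ| := abs_nonneg θ
    -- choose the first step ψ and the remainder φ'
    obtain ⟨ψ, φ', hψ, hφ', hsum⟩ :
        ∃ ψ φ' : ℝ, |ψ| ≤ 2 * |θ| ∧ |φ'| ≤ 2 * n * |θ| ∧ ψ + φ' = φ := by
      by_cases hsmall : |φ| ≤ 2 * |θ|
      · exact ⟨φ, 0, hsmall, by rw [abs_zero]; positivity, by ring⟩
      · push_neg at hsmall
        rcases le_or_gt 0 φ with hpos | hneg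
        · refine ⟨2 * |θ|, φ - 2 * |θ|, by rw [_root_.abs_of_nonneg (by positivity)], ?_, by ring⟩
          rw [_root_.abs_of_nonneg hpos] at hφ hsmall
          rw [_root_.abs_of_nonneg (by linarith)]
          push_cast at hφ ⊢
          linarith
        · refine ⟨-(2 * |θ|), φ + 2 * |θ|, by rw [abs_neg, _root_.abs_of_nonneg (by positivity)], ?_, by ring⟩
          rw [abs_of_neg hneg] at hφ hsmall
          rw [abs_of_nonpos (by linarith)]
          push_cast at hφ ⊢
          linarith
    obtain ⟨x, y, hx, hy, hxy⟩ := pair θ hθc hθπ hs0 ψ hψ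
    obtain ⟨w0, hl, hc, hp⟩ := ih φ' hφ'
    refine ⟨x :: y :: w0, ?_, ?_, ?_⟩
    · simp only [List.length_cons, hl]; omega
    · intro z hz
      simp only [List.mem_cons] at hz
      rcases hz with h | h | h
      · exact h ▸ hx
      · exact h ▸ hy
      · exact hc z h
    · rw [List.prod_cons, List.prod_cons, hp, ← mul_assoc, hxy, Dm_mul, hsum]

/-- Let `u = diag(e^{iφ}, e^{-iφ})` and `v = diag(e^{iθ}, e^{-iθ})` be
non-central elements of `SU(2)`, with `θ ∈ [-π/2, π/2]` (and `φ` a representative of its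
angle in `[-π, π]`). If `|φ| ≤ m|θ|` for some even `m`, then `u` is a product of `m`
conjugates of `v` in `SU(2)`. -/
theorem su2_product_of_conjugates
    (φ θ : ℝ) (hφ : φ ∈ Set.Icc (-π) π) (hθ : θ ∈ Set.Icc (-(π / 2)) (π / 2))
    (u v : Matrix (Fin 2) (Fin 2) ℂ)
    (hu : u = Matrix.diagonal ![Complex.exp (Complex.I * φ), Complex.exp (-(Complex.I * φ))])
    (hv : v = Matrix.diagonal ![Complex.exp (Complex.I * θ), Complex.exp (-(Complex.I * θ))])
    (hu_noncentral : u ≠ 1 ∧ u ≠ -1) (hv_noncentral : v ≠ 1 ∧ v ≠ -1)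
    (m : ℕ) (hm : Even m) (hangle : |φ| ≤ (m : ℝ) * |θ|) :
    ∃ w : List (Matrix (Fin 2) (Fin 2) ℂ), w.length = m ∧
      (∀ x ∈ w, ∃ g ∈ Matrix.specialUnitaryGroup (Fin 2) ℂ, x = g * v * star g) ∧
      w.prod = u := by
  -- diagonal matrices as Dm
  have hvD : v = Dm θ := by
    rw [hv]
    apply fin_two_ext <;> simp [Dm, Matrix.diagonal]
  have huD : u = Dm φ := by
    rw [hu]
    apply fin_two_ext <;> simp [Dm, Matrix.diagonal]
  -- θ ≠ 0
  have hθ0 : θ ≠ 0 := by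
    intro h0
    apply hv_noncentral.1
    rw [hvD, h0]
    apply fin_two_ext <;> simp [Dm, Matrix.one_apply]
  have hθπ : |θ| ≤ π / 2 := abs_le.mpr ⟨by linarith [hθ.1], hθ.2⟩
  have hs0 : Real.sin θ ≠ 0 := by
    intro h0
    have hππ : -π < θ ∧ θ < π := by
      constructor <;> nlinarith [hθ.1, hθ.2, Real.pi_pos]
    exact hθ0 ((Real.sin_eq_zero_iff_of_lt_of_lt hππ.1 hππ.2).mp h0)
  have hθc : 0 ≤ Real.cos θ := Real.cos_nonneg_of_mem_Icc hθ
  obtain ⟨k, hk⟩ := hm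
  have hangle' : |φ| ≤ 2 * (k : ℝ) * |θ| := by
    rw [hk] at hangle; push_cast at hangle ⊢; linarith
  obtain ⟨w, hl, hc, hp⟩ := main_aux θ hθc hθπ hs0 k φ hangle'
  refine ⟨w, by omega, ?_, by rw [hp, huD]⟩
  intro x hx
  rw [hvD]
  exact hc x hx

end
end

section
/- Let u = diag(λ₀, …, λ_{n−1}) be a unitary diagonal matrix that is optimal (in the lexicographic sense defined below), and let σ be a permutation of {0,…,n−2} such that i ↦ |λ_{σ(i)} − λ_{σ(i)+1}| is non-increasing. Then with λ := λ_{n−1}, for all i = 0, …, n−2: μ_i(λ − u) ≤ |λ_{σ(i)} − λ_{σ(i)+1}|, where μ_i denotes the (i+1)-st largest singular value. -/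
/-! Transposing `λ_{k+1}` and `λ_n` leaves the first `k` gaps unchanged and turns the `k`-th
gap into `|λ_k - λ_n|`, so optimality gives `|λ_n - λ_k| ≤ |λ_k - λ_{k+1}|` for every `k < n`.
Hence each `j` with `|λ_n - λ_j| > |λ_{σ(i)} - λ_{σ(i)+1}|` is some `k = σ(m)` whose gap
exceeds the gap at `σ(i)`, which forces `m < i`: there are at most `i` such `j`. -/

open Finset

/-- Lexicographic maximality of the sequence of consecutive gaps of `x` among those of its
rearrangements `x ∘ π`, stated at the first index where two gap sequences differ. -/
def IsGapLexMaximal {E : Type*} [SeminormedAddCommGroup E] {n : ℕ} (x : Fin (n + 1) → E) :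
    Prop :=
  ∀ π : Equiv.Perm (Fin (n + 1)), ∀ k : Fin n,
    (∀ j < k, ‖x (π j.castSucc) - x (π j.succ)‖ = ‖x j.castSucc - x j.succ‖) →
    ‖x (π k.castSucc) - x (π k.succ)‖ ≤ ‖x k.castSucc - x k.succ‖

namespace Fin

variable {n : ℕ} {j k : Fin n}

lemma swap_succ_last_apply_castSucc_of_le (h : j ≤ k) :
    Equiv.swap k.succ (last n) j.castSucc = j.castSucc :=
  Equiv.swap_apply_of_ne_of_ne (by simp only [ne_eq, Fin.ext_iff, val_succ, val_castSucc]; omega)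
    (castSucc_lt_last j).ne

lemma swap_succ_last_apply_succ_of_lt (h : j < k) :
    Equiv.swap k.succ (last n) j.succ = j.succ :=
  Equiv.swap_apply_of_ne_of_ne (by simp only [ne_eq, Fin.ext_iff, val_succ]; omega)
    (by simp only [ne_eq, Fin.ext_iff, val_succ, val_last]; omega)

end Fin

theorem IsGapLexMaximal.norm_last_sub_le_gap {E : Type*} [SeminormedAddCommGroup E] {n : ℕ}
    {x : Fin (n + 1) → E} (hx : IsGapLexMaximal x) (k : Fin n) :
    ‖x (Fin.last n) - x k.castSucc‖ ≤ ‖x k.castSucc - x k.succ‖ := by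
  have := hx (Equiv.swap k.succ (Fin.last n)) k fun j hj => by
    rw [Fin.swap_succ_last_apply_castSucc_of_le hj.le, Fin.swap_succ_last_apply_succ_of_lt hj]
  rwa [Fin.swap_succ_last_apply_castSucc_of_le le_rfl, Equiv.swap_apply_left,
    norm_sub_rev] at this

theorem card_filter_lt_le_of_antitone {ι α : Type*} [Fintype ι] [LinearOrder α] {n : ℕ}
    (g : ι → α) (σ : Fin n ≃ ι) (hg : Antitone (g ∘ σ)) (i : Fin n) :
    #{k | g (σ i) < g k} ≤ i := by
  calc #{k | g (σ i) < g k}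
      ≤ #(Iio i) := card_le_card_of_injOn σ.symm
        (fun k hk => mem_Iio.2 <| lt_of_not_ge fun hik => (hg hik).not_gt (by simpa using hk))
        σ.symm.injective.injOn
    _ = i := Fin.card_Iio i

theorem optimal_diagonal_unitary_singular_value_bound_general
    (n : ℕ) (lam : Fin (n + 1) → ℂ)
    (hopt : ∀ π : Equiv.Perm (Fin (n + 1)), ∀ k : Fin n,
      (∀ j : Fin n, j < k →
        ‖lam (π j.castSucc) - lam (π j.succ)‖ = ‖lam j.castSucc - lam j.succ‖) →
      ‖lam (π k.castSucc) - lam (π k.succ)‖ ≤ ‖lam k.castSucc - lam k.succ‖)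
    (σ : Equiv.Perm (Fin n))
    (hmono : ∀ a b : Fin n, a ≤ b →
      ‖lam (σ b).castSucc - lam (σ b).succ‖ ≤ ‖lam (σ a).castSucc - lam (σ a).succ‖)
    (i : Fin n) :
    (Finset.univ.filter fun j : Fin (n + 1) =>
        ‖lam (σ i).castSucc - lam (σ i).succ‖ < ‖lam (Fin.last n) - lam j‖).card ≤ i := by
  set gap : Fin n → ℝ := fun k => ‖lam k.castSucc - lam k.succ‖
  have hlast := IsGapLexMaximal.norm_last_sub_le_gap (x := lam) hopt
  calc _ ≤ #((univ.filter fun k => gap (σ i) < gap k).map Fin.castSuccEmb) := by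
        refine card_le_card fun j hj => ?_
        simp only [mem_filter, mem_univ, true_and] at hj
        obtain ⟨k, rfl⟩ : ∃ k : Fin n, k.castSucc = j := Fin.exists_castSucc_eq.2 fun h => by
          rw [h, sub_self, norm_zero] at hj
          exact (norm_nonneg _).not_gt hj
        simpa using hj.trans_le (hlast k)
    _ = #{k | gap (σ i) < gap k} := card_map _
    _ ≤ i := card_filter_lt_le_of_antitone gap σ hmono i

/-- Let `u = diag(λ₀, …, λₙ)` be an optimal diagonal unitary (the sequence
of consecutive eigenvalue gaps is lexicographically maximal among all diagonal matrices in
the conjugacy class, i.e. among all permutations of the eigenvalues), and let `σ` be a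
permutation of `{0,…,n-1}` making the gaps non-increasing. Then with `λ := λₙ`, for all
`i`, `μ_i(λ - u) ≤ |λ_{σ(i)} - λ_{σ(i)+1}|`, where `μ_i(λ - u)` is the `(i+1)`-st largest
of the values `|λₙ - λⱼ|`; this is encoded by saying that at most `i` of the values
`‖λₙ - λⱼ‖` strictly exceed the gap at `σ(i)`. -/
theorem optimal_diagonal_unitary_singular_value_bound
    (n : ℕ) (hn : 1 ≤ n) (lam : Fin (n + 1) → ℂ) (hunit : ∀ j, ‖lam j‖ = 1)
    (hopt : ∀ π : Equiv.Perm (Fin (n + 1)), ∀ k : Fin n,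
      (∀ j : Fin n, j < k →
        ‖lam (π j.castSucc) - lam (π j.succ)‖ = ‖lam j.castSucc - lam j.succ‖) →
      ‖lam (π k.castSucc) - lam (π k.succ)‖ ≤ ‖lam k.castSucc - lam k.succ‖)
    (σ : Equiv.Perm (Fin n))
    (hmono : ∀ a b : Fin n, a ≤ b →
      ‖lam (σ b).castSucc - lam (σ b).succ‖ ≤ ‖lam (σ a).castSucc - lam (σ a).succ‖)
    (i : Fin n) :
    (Finset.univ.filter fun j : Fin (n + 1) =>
        ‖lam (σ i).castSucc - lam (σ i).succ‖ < ‖lam (Fin.last n) - lam j‖).card ≤ i :=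
  optimal_diagonal_unitary_singular_value_bound_general n lam hopt σ hmono i
end

section
/- Let G be an inseparable topological group with a compatible left-invariant metric d. Then there exists ε > 0 (depending only on G) such that for every countably syndetic symmetric set W ⊆ G, the product set W·W contains an element u with d(1, u) > ε. -/
/-!
A non-separable metric space contains, for some `ε > 0`, an uncountable `ε`-separated set `V`:
otherwise maximal `ε`-separated sets, which are `ε`-nets, would be countable for every `ε`.
Countably many translates `gₙ • W` cover `V`, so one of them contains two distinct points
`u = gₙ a`, `v = gₙ b` of `V`. Then `u⁻¹ * v = a⁻¹ * b ∈ W⁻¹ * W = W * W`, and by left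
invariance `dist 1 (u⁻¹ * v) = dist u v > ε`.
-/

open Pointwise Set Metric TopologicalSpace
open scoped NNReal ENNReal

namespace Metric

lemma exists_maximal_isSeparated {X : Type*} [PseudoEMetricSpace X] (ε : ℝ≥0∞) (s : Set X) :
    ∃ N, Maximal (fun N ↦ N ⊆ s ∧ IsSeparated ε N) N :=
  zorn_subset {N | N ⊆ s ∧ IsSeparated ε N} fun c hcS hc ↦
    ⟨⋃₀ c,
      ⟨sUnion_subset fun _ hN ↦ (hcS hN).1, hc.pairwise_sUnion.2 fun _ hN ↦ (hcS hN).2⟩,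
      fun _ ↦ subset_sUnion_of_mem⟩

lemma exists_not_countable_isSeparated_of_not_separableSpace {X : Type*} [PseudoMetricSpace X]
    (hX : ¬SeparableSpace X) :
    ∃ ε : ℝ≥0, 0 < ε ∧ ∃ V : Set X, ¬V.Countable ∧ IsSeparated ε V := by
  by_contra! H
  suffices SecondCountableTopology X from hX inferInstance
  refine secondCountable_of_almost_dense_set fun ε hε ↦ ?_
  obtain ⟨N, hN⟩ := exists_maximal_isSeparated (ε.toNNReal : ℝ≥0∞) (univ : Set X)
  have hNc : N.Countable := not_not.1 fun hNc ↦ H _ (Real.toNNReal_pos.2 hε) N hNc hN.prop.2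
  refine ⟨N, hNc, fun x ↦ ?_⟩
  obtain ⟨y, hyN, hxy⟩ :=
    mem_iUnion₂.1 ((IsCover.of_maximal_isSeparated hN).subset_iUnion_closedBall (mem_univ x))
  exact ⟨y, hyN, by simpa [hε.le] using hxy⟩

lemma IsSeparated.lt_dist {X : Type*} [PseudoMetricSpace X] {ε : ℝ≥0} {s : Set X}
    (hs : IsSeparated ε s) {x y : X} (hx : x ∈ s) (hy : y ∈ s) (hxy : x ≠ y) :
    (ε : ℝ) < dist x y := by
  have hε : (ε : ℝ≥0∞) < edist x y := hs hx hy hxy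
  rwa [edist_nndist, ENNReal.coe_lt_coe, ← NNReal.coe_lt_coe, coe_nndist] at hε

end Metric

lemma Set.exists_nontrivial_inter_of_not_countable {α ι : Type*} [Countable ι]
    {s : ι → Set α} {V : Set α} (hV : ¬V.Countable) (hVs : V ⊆ ⋃ i, s i) :
    ∃ i, (V ∩ s i).Nontrivial := by
  by_contra! H
  refine hV ((countable_iUnion fun i ↦ (H i).countable).mono ?_)
  rw [← inter_iUnion]
  exact subset_inter subset_rfl hVs

lemma Set.inv_mul_mem_inv_mul_of_mem_smul_set {G : Type*} [Group G] {W : Set G} {g u v : G}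
    (hu : u ∈ g • W) (hv : v ∈ g • W) : u⁻¹ * v ∈ W⁻¹ * W := by
  obtain ⟨a, ha, rfl⟩ := hu
  obtain ⟨b, hb, rfl⟩ := hv
  exact ⟨a⁻¹, by simpa using ha, b, hb, by simp [mul_assoc]⟩

theorem inseparable_group_countably_syndetic_square_large_element_general
    {G : Type*} [Group G] [MetricSpace G]
    (hleft : ∀ g h k : G, dist (g * h) (g * k) = dist h k)
    (hinsep : ¬ TopologicalSpace.SeparableSpace G) :
    ∃ ε > (0 : ℝ), ∀ W : Set G, W = W⁻¹ →
      (∃ g : ℕ → G, ∀ x : G, ∃ n : ℕ, x ∈ g n • W) →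
      ∃ u ∈ W * W, ε < dist (1 : G) u := by
  obtain ⟨ε, hε, V, hV, hVsep⟩ :=
    exists_not_countable_isSeparated_of_not_separableSpace hinsep
  refine ⟨ε, hε, fun W hW ⟨g, hg⟩ ↦ ?_⟩
  obtain ⟨n, u, ⟨huV, hu⟩, v, ⟨hvV, hv⟩, huv⟩ :=
    exists_nontrivial_inter_of_not_countable hV fun x _ ↦ mem_iUnion.2 (hg x)
  have huv_mem := inv_mul_mem_inv_mul_of_mem_smul_set hu hv
  rw [← hW] at huv_mem
  refine ⟨u⁻¹ * v, huv_mem, ?_⟩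
  have hdist : dist (1 : G) (u⁻¹ * v) = dist u v := by simpa using (hleft u 1 (u⁻¹ * v)).symm
  exact hdist ▸ hVsep.lt_dist huV hvV huv

/-- Let `G` be an inseparable topological group with a compatible
left-invariant metric. Then there exists `ε > 0` (depending only on `G`) such that for
every countably syndetic symmetric set `W ⊆ G`, the set `W·W` contains an element `u`
with `d(1, u) > ε`. -/
theorem inseparable_group_countably_syndetic_square_large_element
    {G : Type*} [Group G] [MetricSpace G] [IsTopologicalGroup G]
    (hleft : ∀ g h k : G, dist (g * h) (g * k) = dist h k)
    (hinsep : ¬ TopologicalSpace.SeparableSpace G) :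
    ∃ ε > (0 : ℝ), ∀ W : Set G, W = W⁻¹ →
      (∃ g : ℕ → G, ∀ x : G, ∃ n : ℕ, x ∈ g n • W) →
      ∃ u ∈ W * W, ε < dist (1 : G) u :=
  inseparable_group_countably_syndetic_square_large_element_general hleft hinsep
end

section
/- Let G be a topological group with the invariant Steinhaus property with exponent k. Then every group homomorphism π : G → H into a separable SIN topological group H is continuous. -/
/-!
Fix a neighbourhood `U` of `1` in `H`, and a conjugation-invariant neighbourhood `V` of `1` so
small that `V ∪ V⁻¹` lies in some `V₀` with `V₀ ^ (2k) ⊆ U`. Since `H` is separable, countably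
many translates `d n • V` cover `H`; picking `g n ∈ G` with `π (g n) ∈ d n • V` whenever possible,
the translates `g n • π⁻¹(V⁻¹V)` cover `G`. So `W = π⁻¹(V⁻¹V)` is symmetric, conjugation-invariant
and countably syndetic, hence `W ^ k` contains an open neighbourhood of `1` whose image under `π`
lies in `(V⁻¹V) ^ k ⊆ U`.
-/

open Pointwise Set Filter Topology

section Group

variable {G : Type*} [Group G]

def IsConjInvariant (W : Set G) : Prop :=
  ∀ g x : G, x ∈ W → g * x * g⁻¹ ∈ W

def CountablySyndetic (W : Set G) : Prop :=
  ∃ f : ℕ → G, ∀ x : G, ∃ n : ℕ, x ∈ f n • W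

theorem IsConjInvariant.inv {W : Set G} (hW : IsConjInvariant W) : IsConjInvariant W⁻¹ :=
  fun g x hx => by simpa [mul_assoc] using hW g x⁻¹ hx

theorem IsConjInvariant.mul {V W : Set G} (hV : IsConjInvariant V) (hW : IsConjInvariant W) :
    IsConjInvariant (V * W) := by
  rintro g _ ⟨a, ha, b, hb, rfl⟩
  exact ⟨g * a * g⁻¹, hV g a ha, g * b * g⁻¹, hW g b hb, by group⟩

theorem IsConjInvariant.preimage {H : Type*} [Group H] {V : Set H} (hV : IsConjInvariant V)
    (π : G →* H) : IsConjInvariant (π ⁻¹' V) :=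
  fun g x hx => by simpa using hV (π g) (π x) hx

theorem MonoidHom.preimage_inv_mul_self_eq_inv {H : Type*} [Group H] (π : G →* H) (V : Set H) :
    π ⁻¹' (V⁻¹ * V) = (π ⁻¹' (V⁻¹ * V))⁻¹ := by
  ext x
  simp only [Set.mem_inv, mem_preimage, map_inv]
  rw [← Set.mem_inv, mul_inv_rev, inv_inv]

theorem MonoidHom.countablySyndetic_preimage_inv_mul {H : Type*} [Group H] (π : G →* H)
    {V : Set H} {d : ℕ → H} (hd : ∀ h, ∃ n, h ∈ d n • V) :
    CountablySyndetic (π ⁻¹' (V⁻¹ * V)) := by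
  choose! g hg using fun n (hn : ∃ x, π x ∈ d n • V) => hn
  refine ⟨g, fun x => ?_⟩
  obtain ⟨n, hn⟩ := hd (π x)
  obtain ⟨a, ha, hga⟩ := hg n ⟨x, hn⟩
  obtain ⟨b, hb, hxb⟩ := hn
  refine ⟨n, mem_smul_set_iff_inv_smul_mem.mpr ⟨a⁻¹, inv_mem_inv.mpr ha, b, hb, ?_⟩⟩
  simp only [smul_eq_mul] at hga hxb
  simp only [smul_eq_mul, map_mul, map_inv, ← hga, ← hxb]
  group

end Group

section TopologicalGroup

variable {H : Type*} [Group H] [TopologicalSpace H] [IsTopologicalGroup H]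

theorem exists_mem_nhds_one_pow_subset {U : Set H} (hU : U ∈ 𝓝 1) :
    ∀ n : ℕ, ∃ V ∈ 𝓝 (1 : H), V ^ n ⊆ U
  | 0 => ⟨univ, univ_mem, by simpa using mem_of_mem_nhds hU⟩
  | n + 1 => by
    obtain ⟨A, hA, hAA⟩ := exists_nhds_one_split hU
    obtain ⟨B, hB, hBA⟩ := exists_mem_nhds_one_pow_subset hA n
    refine ⟨B ∩ A, inter_mem hB hA, ?_⟩
    rintro _ ⟨x, hx, y, hy, rfl⟩
    exact hAA x (hBA (pow_subset_pow_left inter_subset_left hx)) y hy.2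

theorem exists_seq_smul_cover [TopologicalSpace.SeparableSpace H] {V : Set H} (hV : V ∈ 𝓝 1) :
    ∃ d : ℕ → H, ∀ h, ∃ n, h ∈ d n • V := by
  obtain ⟨d, hd⟩ := TopologicalSpace.exists_dense_seq H
  refine ⟨d, fun h => ?_⟩
  have hV' : h • V⁻¹ ∈ 𝓝 h := by simpa using smul_mem_nhds_smul h (inv_mem_nhds_one H hV)
  obtain ⟨n, hn⟩ := hd.mem_nhds hV'
  refine ⟨n, mem_smul_set_iff_inv_smul_mem.mpr ?_⟩
  simpa using inv_mem_inv.mpr (mem_smul_set_iff_inv_smul_mem.mp hn)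

end TopologicalGroup

/-- If `G` has the invariant Steinhaus property with exponent `k` and `H`
is a separable SIN group, then every homomorphism `π : G → H` is continuous. -/
theorem invariant_steinhaus_implies_invariant_automatic_continuity
    {G H : Type*} [Group G] [TopologicalSpace G] [IsTopologicalGroup G]
    [Group H] [TopologicalSpace H] [IsTopologicalGroup H]
    [TopologicalSpace.SeparableSpace H]
    (hSIN : ∀ U ∈ nhds (1 : H), ∃ V ∈ nhds (1 : H), V ⊆ U ∧
      ∀ (h x : H), x ∈ V → h * x * h⁻¹ ∈ V)
    (k : ℕ)
    (hSteinhaus : ∀ W : Set G, W = W⁻¹ →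
      (∀ (g x : G), x ∈ W → g * x * g⁻¹ ∈ W) →
      (∃ f : ℕ → G, ∀ x : G, ∃ n : ℕ, x ∈ f n • W) →
      ∃ U : Set G, IsOpen U ∧ (1 : G) ∈ U ∧ U ⊆ W ^ k)
    (π : G →* H) : Continuous π := by
  refine continuous_of_continuousAt_one π ?_
  intro U hU
  rw [map_one] at hU
  obtain ⟨V₀, hV₀, hV₀U⟩ := exists_mem_nhds_one_pow_subset hU (2 * k)
  obtain ⟨V, hV, hVV₀, hVconj⟩ := hSIN (V₀ ∩ V₀⁻¹) (inter_mem hV₀ (inv_mem_nhds_one H hV₀))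
  obtain ⟨d, hd⟩ := exists_seq_smul_cover hV
  have hsmall : (V⁻¹ * V) ^ k ⊆ U := by
    have hVV : V⁻¹ * V ⊆ V₀ * V₀ :=
      mul_subset_mul (fun x hx => by simpa using (hVV₀ hx).2) (fun x hx => (hVV₀ hx).1)
    calc (V⁻¹ * V) ^ k ⊆ (V₀ * V₀) ^ k := pow_subset_pow_left hVV
      _ = V₀ ^ (2 * k) := by rw [← sq, ← pow_mul]
      _ ⊆ U := hV₀U
  obtain ⟨O, hO, h1O, hOW⟩ := hSteinhaus (π ⁻¹' (V⁻¹ * V)) (π.preimage_inv_mul_self_eq_inv V)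
    ((IsConjInvariant.inv hVconj).mul hVconj |>.preimage π)
    (π.countablySyndetic_preimage_inv_mul hd)
  exact mem_map.mpr <| mem_of_superset (hO.mem_nhds h1O) fun x hx =>
    hsmall (preimage_pow_subset π _ k (hOW hx))
end
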